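/- arXiv:1901.05443 — 6 statements merged into one kernel-verified Lean document; each statement's English description precedes it below -/
import Mathlib

section
/- Let X₁ ⊆ X₀ ⊆ X be a dense nest of Banach spaces. Let U, V ⊆ X₀ be open, T : V → U a map with T(V ∩ X₁) ⊆ X₁, G : U → ℝ, and H = G ∘ T. (a) Let v₀ ∈ V ∩ X₁ and u₀ = T(v₀). Assume: there is A ∈ L(X) mapping X₁ into X₀ such that the restriction of T to V ∩ X₁ is differentiable at v₀ along X₁ into X₀ with derivative z ↦ A z; G is differentiable at u₀ along X₀ with X-extended derivative ℓ ∈ L(X,ℝ); and H is differentiable at v₀ along X₀ with X-extended derivative m ∈ L(X,ℝ). Then m = ℓ ∘ A. (b) Suppose moreover that V ∩ X₁ is dense in V (X₀-norm), T is continuous from V to U (X₀-topologies), the hypotheses of (a) hold at every point of V ∩ X₁, at every v ∈ V the maps T and H are differentiable along X₀ with X-extended derivatives A(v) ∈ L(X) and m(v) ∈ L(X,ℝ), at every u ∈ U the map G is differentiable along X₀ with X-extended derivative ℓ(u) ∈ L(X,ℝ), and the assignments v ↦ A(v), v ↦ m(v), u ↦ ℓ(u) are continuous in operator norm (domains with the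 X₀-topology). Then m(v) = ℓ(T(v)) ∘ A(v) for every v ∈ V. -/
open Set

/-!
At a point `v₀ = ι₁ v₁` of the inner kernel, both `m ∘ ι₀ ∘ ι₁` and `ℓ ∘ ι₀ ∘ BA` are derivatives
of `G ∘ T ∘ ι₁` on the open set `ι₁⁻¹ V` (the first by restricting `H = G ∘ T`, the second by the
chain rule), so they coincide; since `ι₀ ∘ BA = A ∘ ι₀ ∘ ι₁`, the operators `m` and `ℓ ∘ A` agree on
the dense range of `ι₀ ∘ ι₁`, hence everywhere. At a general point of `V`, both sides of the
relation depend continuously on the point and agree on the dense subset `V ∩ X₁`.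
-/

section ChainRelation

variable {𝕜 X X₀ X₁ Y : Type*} [NontriviallyNormedField 𝕜]
  [NormedAddCommGroup X] [NormedSpace 𝕜 X] [NormedAddCommGroup X₀] [NormedSpace 𝕜 X₀]
  [NormedAddCommGroup X₁] [NormedSpace 𝕜 X₁] [NormedAddCommGroup Y] [NormedSpace 𝕜 Y]

theorem ContinuousLinearMap.ext_of_comp_denseRange {f g : X →L[𝕜] Y} {e : X₀ →L[𝕜] X}
    (he : DenseRange e) (h : f.comp e = g.comp e) : f = g :=
  coeFn_injective <| he.equalizer f.continuous g.continuous <| congrArg (⇑) h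

theorem extendedDeriv_eq_comp_of_mem_inner {ι₀ : X₀ →L[𝕜] X} {ι₁ : X₁ →L[𝕜] X₀}
    (hdense : DenseRange (ι₀.comp ι₁)) {U V : Set X₀} (hV : IsOpen V)
    {T : X₀ → X₀} (hT : MapsTo T V U) {G : X₀ → Y} {v₁ : X₁} (hv₁ : ι₁ v₁ ∈ V)
    {A : X →L[𝕜] X} {BA : X₁ →L[𝕜] X₀} (hBA : ι₀.comp BA = (A.comp ι₀).comp ι₁)
    (hTd : HasFDerivWithinAt (fun z => T (ι₁ z)) BA (ι₁ ⁻¹' V) v₁) {ℓ m : X →L[𝕜] Y}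
    (hG : HasFDerivWithinAt G (ℓ.comp ι₀) U (T (ι₁ v₁)))
    (hH : HasFDerivWithinAt (fun y => G (T y)) (m.comp ι₀) V (ι₁ v₁)) :
    m = ℓ.comp A := by
  have h_inner : (m.comp ι₀).comp ι₁ = (ℓ.comp ι₀).comp BA :=
    ((hV.preimage ι₁.continuous).uniqueDiffWithinAt hv₁).eq
      (hH.comp v₁ ι₁.hasFDerivWithinAt (mapsTo_preimage _ _))
      (hG.comp (f := fun z => T (ι₁ z)) v₁ hTd fun _ hz => hT hz)
  refine ContinuousLinearMap.ext_of_comp_denseRange hdense ?_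
  calc m.comp (ι₀.comp ι₁) = ℓ.comp (ι₀.comp BA) := h_inner
    _ = (ℓ.comp A).comp (ι₀.comp ι₁) := by rw [hBA]; rfl

end ChainRelation

theorem real_valued_chain_relation_general
    {X X₀ X₁ : Type*}
    [NormedAddCommGroup X] [NormedSpace ℝ X]
    [NormedAddCommGroup X₀] [NormedSpace ℝ X₀]
    [NormedAddCommGroup X₁] [NormedSpace ℝ X₁]
    -- the dense nest X₁ ⊆ X₀ ⊆ X
    (ι₀ : X₀ →L[ℝ] X) (hι₀dense : DenseRange ι₀)
    (ι₁ : X₁ →L[ℝ] X₀) (hι₁dense : DenseRange ι₁)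
    (U V : Set X₀) (hV : IsOpen V)
    (T : X₀ → X₀) (hT : MapsTo T V U)
    (G : X₀ → ℝ) :
    -- part (a): at a point v₀ = ι₁ v₁ of V ∩ X₁
    ((∀ v₁ : X₁, ι₁ v₁ ∈ V →
        ∀ (A : X →L[ℝ] X) (BA : X₁ →L[ℝ] X₀),
          ι₀.comp BA = (A.comp ι₀).comp ι₁ →
          HasFDerivWithinAt (fun z : X₁ => T (ι₁ z)) BA (ι₁ ⁻¹' V) v₁ →
          ∀ ℓ m : X →L[ℝ] ℝ,
            HasFDerivWithinAt G (ℓ.comp ι₀) U (T (ι₁ v₁)) →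
            HasFDerivWithinAt (fun y => G (T y)) (m.comp ι₀) V (ι₁ v₁) →
            m = ℓ.comp A)
     ∧
     -- part (b): at every point of V, by density of V ∩ X₁ and continuity
     (V ⊆ closure (V ∩ range ι₁) →
      ContinuousOn T V →
      ∀ (A : X₀ → (X →L[ℝ] X)) (m ℓ : X₀ → (X →L[ℝ] ℝ)),
        (∀ v ∈ V, HasFDerivWithinAt (fun y => ι₀ (T y)) ((A v).comp ι₀) V v) →
        (∀ v ∈ V, HasFDerivWithinAt (fun y => G (T y)) ((m v).comp ι₀) V v) →
        (∀ u ∈ U, HasFDerivWithinAt G ((ℓ u).comp ι₀) U u) →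
        ContinuousOn A V → ContinuousOn m V → ContinuousOn ℓ U →
        (∀ v₁ : X₁, ι₁ v₁ ∈ V → ∃ BA : X₁ →L[ℝ] X₀,
          ι₀.comp BA = ((A (ι₁ v₁)).comp ι₀).comp ι₁ ∧
          HasFDerivWithinAt (fun z : X₁ => T (ι₁ z)) BA (ι₁ ⁻¹' V) v₁) →
        ∀ v ∈ V, m v = (ℓ (T v)).comp (A v))) := by
  have hdense : DenseRange (ι₀.comp ι₁) := hι₀dense.comp hι₁dense ι₀.continuous
  refine ⟨fun v₁ hv₁ A BA hBA hTd ℓ m hG hH =>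
    extendedDeriv_eq_comp_of_mem_inner hdense hV hT hv₁ hBA hTd hG hH, ?_⟩
  intro hV_closure hTc A m ℓ _ hm hℓ hAc hmc hℓc hBA
  have h_inner : EqOn m (fun v => (ℓ (T v)).comp (A v)) (V ∩ range ι₁) := by
    rintro _ ⟨hv, v₁, rfl⟩
    obtain ⟨BA, hBA_eq, hTd⟩ := hBA v₁ hv
    exact extendedDeriv_eq_comp_of_mem_inner hdense hV hT hv hBA_eq hTd
      (hℓ _ (hT hv)) (hm _ hv)
  exact h_inner.of_subset_closure hmc ((hℓc.comp hTc hT).clm_comp hAc) inter_subset_left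
    hV_closure

/-- Chart-level formulation of Lemma 2.5, assertions (2) and (3): the chain relation (2.7)
for the `X`-extended derivatives of a real-valued function under composition with a chart
transition, (a) at points of the inner kernel `X₁`, and (b) by density and continuity, at
every point of `V`. -/
theorem real_valued_chain_relation
    {X X₀ X₁ : Type*}
    [NormedAddCommGroup X] [NormedSpace ℝ X] [CompleteSpace X]
    [NormedAddCommGroup X₀] [NormedSpace ℝ X₀] [CompleteSpace X₀]
    [NormedAddCommGroup X₁] [NormedSpace ℝ X₁] [CompleteSpace X₁]
    -- the dense nest X₁ ⊆ X₀ ⊆ X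
    (ι₀ : X₀ →L[ℝ] X) (hι₀inj : Function.Injective ι₀) (hι₀dense : DenseRange ι₀)
    (ι₁ : X₁ →L[ℝ] X₀) (hι₁inj : Function.Injective ι₁) (hι₁dense : DenseRange ι₁)
    (U V : Set X₀) (hU : IsOpen U) (hV : IsOpen V)
    (T : X₀ → X₀) (hT : MapsTo T V U)
    (hT₁ : MapsTo T (V ∩ range ι₁) (range ι₁))
    (G : X₀ → ℝ) :
    -- part (a): at a point v₀ = ι₁ v₁ of V ∩ X₁
    ((∀ v₁ : X₁, ι₁ v₁ ∈ V →
        ∀ (A : X →L[ℝ] X) (BA : X₁ →L[ℝ] X₀),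
          ι₀.comp BA = (A.comp ι₀).comp ι₁ →
          HasFDerivWithinAt (fun z : X₁ => T (ι₁ z)) BA (ι₁ ⁻¹' V) v₁ →
          ∀ ℓ m : X →L[ℝ] ℝ,
            HasFDerivWithinAt G (ℓ.comp ι₀) U (T (ι₁ v₁)) →
            HasFDerivWithinAt (fun y => G (T y)) (m.comp ι₀) V (ι₁ v₁) →
            m = ℓ.comp A)
     ∧
     -- part (b): at every point of V, by density of V ∩ X₁ and continuity
     (V ⊆ closure (V ∩ range ι₁) →
      ContinuousOn T V →
      ∀ (A : X₀ → (X →L[ℝ] X)) (m ℓ : X₀ → (X →L[ℝ] ℝ)),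
        (∀ v ∈ V, HasFDerivWithinAt (fun y => ι₀ (T y)) ((A v).comp ι₀) V v) →
        (∀ v ∈ V, HasFDerivWithinAt (fun y => G (T y)) ((m v).comp ι₀) V v) →
        (∀ u ∈ U, HasFDerivWithinAt G ((ℓ u).comp ι₀) U u) →
        ContinuousOn A V → ContinuousOn m V → ContinuousOn ℓ U →
        (∀ v₁ : X₁, ι₁ v₁ ∈ V → ∃ BA : X₁ →L[ℝ] X₀,
          ι₀.comp BA = ((A (ι₁ v₁)).comp ι₀).comp ι₁ ∧
          HasFDerivWithinAt (fun z : X₁ => T (ι₁ z)) BA (ι₁ ⁻¹' V) v₁) →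
        ∀ v ∈ V, m v = (ℓ (T v)).comp (A v))) :=
  real_valued_chain_relation_general ι₀ hι₀dense ι₁ hι₁dense U V hV T hT G
end

section
/- Let X₁ ⊆ X₀ ⊆ X be a dense nest of Banach spaces. Let W, U, V ⊆ X₀ be open and let S : W → U and Q : U → V be bijections such that S, Q and Q∘S are differentiable along X₀ (into X) at every point of their domains with X-extended derivatives A_S(w), A_Q(u), A_{Q∘S}(w) ∈ L(X), these assignments are continuous into L(X) (domains with the X₀-topology), S and Q map the X₁-parts of their domains into X₁ with W ∩ X₁ dense in W and U ∩ X₁ dense in U, and at points of the X₁-parts the restrictions of S and Q are differentiable along X₁ into X₀ with derivatives given by restricting A_S, A_Q (in particular, A_{Q∘S}(w) = A_Q(S(w)) ∘ A_S(w) for all w ∈ W). Let ε > 0, w₀ ∈ W, and let c : (−ε, ε) → W be a curve with c(0) = w₀ that is differentiable at t = 0 as a map into X₀. Then S∘c and (Q∘S)∘c are differentiable at t = 0 as maps into X, and ((Q∘S)∘c)'(0) = A_Q(S(w₀))((S∘c)'(0)). -/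
open Set Filter Topology Asymptotics

theorem curve_fully_differentiable_general
    {X X₀ : Type*}
    [NormedAddCommGroup X] [NormedSpace ℝ X]
    [NormedAddCommGroup X₀] [NormedSpace ℝ X₀]
    -- the dense nest X₁ ⊆ X₀ ⊆ X
    (ι₀ : X₀ →L[ℝ] X)
    (W : Set X₀)
    (S Q : X₀ → X₀)
    (AS AQ AQS : X₀ → (X →L[ℝ] X))
    -- differentiability along X₀ into X with X-extended derivatives
    (hSd : ∀ w ∈ W, HasFDerivWithinAt (fun y => ι₀ (S y)) ((AS w).comp ι₀) W w)
    (hQSd : ∀ w ∈ W, HasFDerivWithinAt (fun y => ι₀ (Q (S y))) ((AQS w).comp ι₀) W w)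
    -- in particular, the chain rule for the X-extended derivatives
    (hchain : ∀ w ∈ W, AQS w = (AQ (S w)).comp (AS w))
    -- the curve
    (ε : ℝ) (w₀ : X₀) (hw₀ : w₀ ∈ W)
    (c : ℝ → X₀) (hc : ∀ t ∈ Ioo (-ε) ε, c t ∈ W) (hc0 : c 0 = w₀)
    (c' : X₀) (hcd : HasDerivWithinAt c c' (Ioo (-ε) ε) 0) :
    ∃ d : X,
      HasDerivWithinAt (fun t => ι₀ (S (c t))) d (Ioo (-ε) ε) 0 ∧
      HasDerivWithinAt (fun t => ι₀ (Q (S (c t)))) ((AQ (S w₀)) d) (Ioo (-ε) ε) 0 := by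
  subst hc0
  refine ⟨AS (c 0) (ι₀ c'), (hSd _ hw₀).comp_hasDerivWithinAt 0 hcd hc, ?_⟩
  have hQS := (hQSd _ hw₀).comp_hasDerivWithinAt 0 hcd hc
  rwa [hchain _ hw₀] at hQS

/-- Chart-level formulation of Lemma 2.7: a curve in `X₀` through `w₀` that is
differentiable at `t = 0` into `X₀` has, after composition with the regular transitions
`S` and `Q ∘ S`, representations differentiable at `t = 0` into `X`, and the derivatives
are related by the `X`-extended transition derivative: `((Q∘S)∘c)'(0) = A_Q(S w₀)((S∘c)'(0))`. -/
theorem curve_fully_differentiable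
    {X X₀ X₁ : Type*}
    [NormedAddCommGroup X] [NormedSpace ℝ X] [CompleteSpace X]
    [NormedAddCommGroup X₀] [NormedSpace ℝ X₀] [CompleteSpace X₀]
    [NormedAddCommGroup X₁] [NormedSpace ℝ X₁] [CompleteSpace X₁]
    -- the dense nest X₁ ⊆ X₀ ⊆ X
    (ι₀ : X₀ →L[ℝ] X) (hι₀inj : Function.Injective ι₀) (hι₀dense : DenseRange ι₀)
    (ι₁ : X₁ →L[ℝ] X₀) (hι₁inj : Function.Injective ι₁) (hι₁dense : DenseRange ι₁)
    (W U V : Set X₀) (hW : IsOpen W) (hU : IsOpen U) (hV : IsOpen V)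
    (S Q : X₀ → X₀) (hSbij : BijOn S W U) (hQbij : BijOn Q U V)
    (AS AQ AQS : X₀ → (X →L[ℝ] X))
    -- differentiability along X₀ into X with X-extended derivatives
    (hSd : ∀ w ∈ W, HasFDerivWithinAt (fun y => ι₀ (S y)) ((AS w).comp ι₀) W w)
    (hQd : ∀ u ∈ U, HasFDerivWithinAt (fun y => ι₀ (Q y)) ((AQ u).comp ι₀) U u)
    (hQSd : ∀ w ∈ W, HasFDerivWithinAt (fun y => ι₀ (Q (S y))) ((AQS w).comp ι₀) W w)
    -- continuity of the derivative assignments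
    (hASc : ContinuousOn AS W) (hAQc : ContinuousOn AQ U) (hAQSc : ContinuousOn AQS W)
    -- X₁-part conditions
    (hSX₁ : MapsTo S (W ∩ range ι₁) (range ι₁)) (hQX₁ : MapsTo Q (U ∩ range ι₁) (range ι₁))
    (hWdense : W ⊆ closure (W ∩ range ι₁)) (hUdense : U ⊆ closure (U ∩ range ι₁))
    (BS BQ : X₁ → (X₁ →L[ℝ] X₀))
    (hBS : ∀ z : X₁, ι₁ z ∈ W → ι₀.comp (BS z) = ((AS (ι₁ z)).comp ι₀).comp ι₁)
    (hSd₁ : ∀ z : X₁, ι₁ z ∈ W →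
      HasFDerivWithinAt (fun z' : X₁ => S (ι₁ z')) (BS z) (ι₁ ⁻¹' W) z)
    (hBQ : ∀ z : X₁, ι₁ z ∈ U → ι₀.comp (BQ z) = ((AQ (ι₁ z)).comp ι₀).comp ι₁)
    (hQd₁ : ∀ z : X₁, ι₁ z ∈ U →
      HasFDerivWithinAt (fun z' : X₁ => Q (ι₁ z')) (BQ z) (ι₁ ⁻¹' U) z)
    -- in particular, the chain rule for the X-extended derivatives
    (hchain : ∀ w ∈ W, AQS w = (AQ (S w)).comp (AS w))
    -- the curve
    (ε : ℝ) (hε : 0 < ε) (w₀ : X₀) (hw₀ : w₀ ∈ W)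
    (c : ℝ → X₀) (hc : ∀ t ∈ Ioo (-ε) ε, c t ∈ W) (hc0 : c 0 = w₀)
    (c' : X₀) (hcd : HasDerivWithinAt c c' (Ioo (-ε) ε) 0) :
    ∃ d : X,
      HasDerivWithinAt (fun t => ι₀ (S (c t))) d (Ioo (-ε) ε) 0 ∧
      HasDerivWithinAt (fun t => ι₀ (Q (S (c t)))) ((AQ (S w₀)) d) (Ioo (-ε) ε) 0 :=
  curve_fully_differentiable_general ι₀ W S Q AS AQ AQS hSd hQSd hchain ε w₀ hw₀ c hc hc0 c' hcd
end

section
/- Let X₀ ⊆ X ⊆ X̃ be a dense nest of Banach spaces (X₀ densely and continuously embedded in X, and X densely and continuously embedded in X̃). Let U ⊆ X be open in the X-norm topology and g : U → X a map. Assume: for every u ∈ U there is Ã(u) ∈ L(X̃) such that g is differentiable at u along X with X̃-extended derivative Ã(u), i.e. ‖g(u') − g(u) − Ã(u)(u' − u)‖_{X̃} = o(‖u' − u‖_X) as u' → u in U; and for every u ∈ U ∩ X₀ the operator Ã(u) maps X into X with restriction A(u) ∈ L(X). Let w₀ ∈ U ∩ X₀, ε > 0, and let c : (−ε, ε) → U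 be a curve with c(0) = w₀ that is differentiable at t = 0 as a map into X. Then g∘c is differentiable at t = 0 as a map into X̃ with (g∘c)'(0) = Ã(w₀)(c'(0)) = A(w₀)(c'(0)) ∈ X; in particular, if g∘c is differentiable at t = 0 as a map into X, then its derivative in X equals A(w₀)(c'(0)). -/
open Set

section ShellChainRule

variable {𝕜 : Type*} [NontriviallyNormedField 𝕜]
  {X Xt : Type*} [NormedAddCommGroup X] [NormedSpace 𝕜 X]
  [NormedAddCommGroup Xt] [NormedSpace 𝕜 Xt]

theorem HasFDerivWithinAt.hasDerivWithinAt_comp_of_comp_eq {g : X → X} {j : X →L[𝕜] Xt}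
    {At : Xt →L[𝕜] Xt} {A : X →L[𝕜] X} {U : Set X} {c : 𝕜 → X} {c' : X} {s : Set 𝕜} {x : 𝕜}
    (hg : HasFDerivWithinAt (fun y => j (g y)) (At.comp j) U (c x))
    (hA : j.comp A = At.comp j) (hc : HasDerivWithinAt c c' s x) (hcU : MapsTo c s U) :
    HasDerivWithinAt (fun t => j (g (c t))) (j (A c')) s x := by
  have h := hg.comp_hasDerivWithinAt x hc hcU
  rwa [← hA] at h

theorem HasDerivWithinAt.eq_of_injective_comp {f : 𝕜 → X} {j : X →L[𝕜] Xt}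
    {d e : X} {s : Set 𝕜} {x : 𝕜} (hj : Function.Injective j) (hs : UniqueDiffWithinAt 𝕜 s x)
    (hf : HasDerivWithinAt f d s x) (hjf : HasDerivWithinAt (fun t => j (f t)) (j e) s x) :
    d = e :=
  hj <| hs.eq_deriv s (j.hasFDerivAt.comp_hasDerivWithinAt x hf) hjf

end ShellChainRule

theorem shell_curve_differentiable_general
    {X₀ X Xt : Type*}
    [NormedAddCommGroup X₀] [NormedSpace ℝ X₀]
    [NormedAddCommGroup X] [NormedSpace ℝ X]
    [NormedAddCommGroup Xt] [NormedSpace ℝ Xt]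
    -- the dense nest X₀ ⊆ X ⊆ X̃
    (ι : X₀ →L[ℝ] X)
    (j : X →L[ℝ] Xt) (hjinj : Function.Injective j)
    (U : Set X)
    (g : X → X)
    (At : X → (Xt →L[ℝ] Xt))
    (hgd : ∀ u ∈ U, HasFDerivWithinAt (fun y => j (g y)) ((At u).comp j) U u)
    (A : X → (X →L[ℝ] X))
    (hA : ∀ u ∈ U, u ∈ range ι → j.comp (A u) = (At u).comp j)
    (w₀ : X) (hw₀U : w₀ ∈ U) (hw₀₀ : w₀ ∈ range ι)
    (ε : ℝ) (hε : 0 < ε)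
    (c : ℝ → X) (hc : ∀ t ∈ Ioo (-ε) ε, c t ∈ U) (hc0 : c 0 = w₀)
    (c' : X) (hcd : HasDerivWithinAt c c' (Ioo (-ε) ε) 0) :
    HasDerivWithinAt (fun t => j (g (c t))) (j ((A w₀) c')) (Ioo (-ε) ε) 0 ∧
    ∀ d : X, HasDerivWithinAt (fun t => g (c t)) d (Ioo (-ε) ε) 0 → d = (A w₀) c' := by
  have hgc : HasDerivWithinAt (fun t => j (g (c t))) (j (A w₀ c')) (Ioo (-ε) ε) 0 :=
    HasFDerivWithinAt.hasDerivWithinAt_comp_of_comp_eq (hc0 ▸ hgd w₀ hw₀U)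
      (hA w₀ hw₀U hw₀₀) hcd hc
  have hunique : UniqueDiffWithinAt ℝ (Ioo (-ε) ε) 0 :=
    isOpen_Ioo.uniqueDiffWithinAt ⟨neg_lt_zero.mpr hε, hε⟩
  exact ⟨hgc, fun d hd => hd.eq_of_injective_comp hjinj hunique hgc⟩

/-- Chart-level formulation of Lemma 2.8: for a dense nest `X₀ ⊆ X ⊆ X̃` (shell situation),
if `g` is differentiable along `X` into `X̃` at each point of the open set `U ⊆ X` with
`X̃`-extended derivative `Ã(u)` whose restriction at points of `U ∩ X₀` is `A(u) ∈ L(X)`,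
and `c` is a curve through `w₀ ∈ U ∩ X₀` differentiable at `t = 0` into `X`, then `g ∘ c`
is differentiable at `t = 0` into `X̃` with derivative `Ã(w₀)(c'(0)) = A(w₀)(c'(0)) ∈ X`;
in particular any derivative of `g ∘ c` in `X` equals `A(w₀)(c'(0))`. -/
theorem shell_curve_differentiable
    {X₀ X Xt : Type*}
    [NormedAddCommGroup X₀] [NormedSpace ℝ X₀] [CompleteSpace X₀]
    [NormedAddCommGroup X] [NormedSpace ℝ X] [CompleteSpace X]
    [NormedAddCommGroup Xt] [NormedSpace ℝ Xt] [CompleteSpace Xt]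
    -- the dense nest X₀ ⊆ X ⊆ X̃
    (ι : X₀ →L[ℝ] X) (hιinj : Function.Injective ι) (hιdense : DenseRange ι)
    (j : X →L[ℝ] Xt) (hjinj : Function.Injective j) (hjdense : DenseRange j)
    (U : Set X) (hU : IsOpen U)
    (g : X → X)
    (At : X → (Xt →L[ℝ] Xt))
    (hgd : ∀ u ∈ U, HasFDerivWithinAt (fun y => j (g y)) ((At u).comp j) U u)
    (A : X → (X →L[ℝ] X))
    (hA : ∀ u ∈ U, u ∈ range ι → j.comp (A u) = (At u).comp j)
    (w₀ : X) (hw₀U : w₀ ∈ U) (hw₀₀ : w₀ ∈ range ι)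
    (ε : ℝ) (hε : 0 < ε)
    (c : ℝ → X) (hc : ∀ t ∈ Ioo (-ε) ε, c t ∈ U) (hc0 : c 0 = w₀)
    (c' : X) (hcd : HasDerivWithinAt c c' (Ioo (-ε) ε) 0) :
    HasDerivWithinAt (fun t => j (g (c t))) (j ((A w₀) c')) (Ioo (-ε) ε) 0 ∧
    ∀ d : X, HasDerivWithinAt (fun t => g (c t)) d (Ioo (-ε) ε) 0 → d = (A w₀) c' :=
  shell_curve_differentiable_general ι j hjinj U g At hgd A hA w₀ hw₀U hw₀₀ ε hε c hc hc0 c' hcd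
end

section
/- Let X₁ ⊆ X₀ ⊆ X be a dense nest of Banach spaces. Let V₀ ⊆ X₀ be open, V₁ = V₀ ∩ X₁, and assume V₁ is dense in V₀ (X₀-norm). Let Φ : V₀ → X₀ be injective with U₀ := Φ(V₀) open in X₀ and Φ(V₁) ⊆ X₁, and let Ψ : V₀ → L(X) be such that every Ψ(y) is invertible in L(X). Let F_U : U₀ → X and define F_V : V₀ → X by F_V(y) = Ψ(y)(F_U(Φ(y))). Assume: (i) for every y ∈ V₁, Ψ(y)⁻¹ maps X₀ into X₀, and the restriction of Φ to V₁ is differentiable at y along X₁ into X₀ with derivative z ↦ Ψ(y)⁻¹ z; (ii) for every y ∈ V₁, the map Ψ : V₀ → L(X) is differentiable at y along X₀ with X-extended derivative Ψ'(y) ∈ L(X, L(X)); (iii) for every x ∈ U₀, F_U is Fréchet differentiable at x as a map from U₀ (X₀-topology) into X, with derivative F_U'(x) ∈ L(X₀, X); (iv) for every y ∈ V₀, F_V is Fréchet differentiable at y as a map from V₀ into X, with derivative F_V'(y) ∈ L(X₀, X); (v) for every y ∈ V₁, the map z ↦ Ψ(y)(F_U'(Φ(y))(Ψ(y)⁻¹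 z)) is bounded from X₀ to X. Then for every y ∈ V₁ and every z ∈ X₀: F_V'(y) z = Ψ(y)(F_U'(Φ(y))(Ψ(y)⁻¹ z)) + (Ψ'(y) z)(F_U(Φ(y))). -/
/-!
Along the dense subspace `X₁`, the map `z ↦ F_V(ι₁ z) = Ψ(ι₁ z)(F_U(Φ(ι₁ z)))` is differentiated by
the chain and product rules, using the derivative of `Φ` along `X₁`. Since `V₀` is open this
derivative is also `F_V'(y) ∘ ι₁`, so `F_V'(y)` and the claimed operator agree on the dense range
of `ι₁`, hence everywhere.
-/

open Set

section DenseSubspace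

variable {𝕜 : Type*} [NontriviallyNormedField 𝕜]
  {E₁ E F : Type*} [NormedAddCommGroup E₁] [NormedSpace 𝕜 E₁] [NormedAddCommGroup E]
  [NormedSpace 𝕜 E] [NormedAddCommGroup F] [NormedSpace 𝕜 F]

theorem ContinuousLinearMap.ext_of_comp_denseRange_s6 {ι : E₁ →L[𝕜] E} (hι : DenseRange ι)
    {S T : E →L[𝕜] F} (h : S.comp ι = T.comp ι) : S = T :=
  DFunLike.coe_injective <| hι.equalizer S.continuous T.continuous <| congrArg DFunLike.coe h

theorem HasFDerivWithinAt.eq_of_comp_denseRange {ι : E₁ →L[𝕜] E} (hι : DenseRange ι)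
    {s : Set E} (hs : IsOpen s) {z : E₁} (hz : ι z ∈ s) {f : E → F} {f' T : E →L[𝕜] F}
    (hf : HasFDerivWithinAt f f' s (ι z))
    (hfι : HasFDerivWithinAt (f ∘ ι) (T.comp ι) (ι ⁻¹' s) z) : f' = T := by
  have h_comp : HasFDerivAt (f ∘ ι) (f'.comp ι) z :=
    (hf.hasFDerivAt (hs.mem_nhds hz)).comp z ι.hasFDerivAt
  have h_along : HasFDerivAt (f ∘ ι) (T.comp ι) z :=
    hfι.hasFDerivAt ((hs.preimage ι.continuous).mem_nhds hz)
  exact ContinuousLinearMap.ext_of_comp_denseRange_s6 hι (h_comp.unique h_along)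

end DenseSubspace

theorem vector_field_representation_rule_general
    {X X₀ X₁ : Type*}
    [NormedAddCommGroup X] [NormedSpace ℝ X]
    [NormedAddCommGroup X₀] [NormedSpace ℝ X₀]
    [NormedAddCommGroup X₁] [NormedSpace ℝ X₁]
    -- the dense nest X₁ ⊆ X₀ ⊆ X
    (ι₀ : X₀ →L[ℝ] X)
    (ι₁ : X₁ →L[ℝ] X₀) (hι₁dense : DenseRange ι₁)
    (V₀ : Set X₀) (hV₀ : IsOpen V₀)
    (Φ : X₀ → X₀)
    (Ψ : X₀ → (X →L[ℝ] X))
    (FU FV : X₀ → X)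
    (hFV : ∀ y ∈ V₀, FV y = Ψ y (FU (Φ y)))
    -- (i) Ψ(y)⁻¹ maps X₀ into X₀ with restriction Pinv₀ y, and the restriction of Φ to V₁
    -- is differentiable along X₁ into X₀ with derivative z ↦ Ψ(y)⁻¹ z
    (Pinv₀ : X₀ → (X₀ →L[ℝ] X₀))
    (hΦd₁ : ∀ z : X₁, ι₁ z ∈ V₀ →
      HasFDerivWithinAt (fun z' : X₁ => Φ (ι₁ z')) ((Pinv₀ (ι₁ z)).comp ι₁) (ι₁ ⁻¹' V₀) z)
    -- (ii) Ψ is differentiable along X₀ with X-extended derivative Ψ'(y) ∈ L(X, L(X))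
    (Ψ' : X₀ → (X →L[ℝ] (X →L[ℝ] X)))
    (hΨd : ∀ z : X₁, ι₁ z ∈ V₀ → HasFDerivWithinAt Ψ ((Ψ' (ι₁ z)).comp ι₀) V₀ (ι₁ z))
    -- (iii) F_U Fréchet differentiable on U₀ = Φ '' V₀
    (FU' : X₀ → (X₀ →L[ℝ] X))
    (hFUd : ∀ x ∈ Φ '' V₀, HasFDerivWithinAt FU (FU' x) (Φ '' V₀) x)
    -- (iv) F_V Fréchet differentiable on V₀
    (FV' : X₀ → (X₀ →L[ℝ] X))
    (hFVd : ∀ y ∈ V₀, HasFDerivWithinAt FV (FV' y) V₀ y) :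
    ∀ z : X₁, ι₁ z ∈ V₀ → ∀ w : X₀,
      FV' (ι₁ z) w
        = Ψ (ι₁ z) (FU' (Φ (ι₁ z)) (Pinv₀ (ι₁ z) w))
          + (Ψ' (ι₁ z) (ι₀ w)) (FU (Φ (ι₁ z))) := by
  intro z hz w
  set y := ι₁ z
  have hΨ_along : HasFDerivWithinAt (fun z' => Ψ (ι₁ z')) (((Ψ' y).comp ι₀).comp ι₁)
      (ι₁ ⁻¹' V₀) z :=
    (hΨd z hz).comp z ι₁.hasFDerivAt.hasFDerivWithinAt (mapsTo_preimage _ _)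
  have hFU_along : HasFDerivWithinAt (fun z' => FU (Φ (ι₁ z')))
      ((FU' (Φ y)).comp ((Pinv₀ y).comp ι₁)) (ι₁ ⁻¹' V₀) z :=
    (hFUd _ (mem_image_of_mem Φ hz)).comp z (hΦd₁ z hz) fun _ hx => mem_image_of_mem Φ hx
  have hFV_along : HasFDerivWithinAt (FV ∘ ι₁)
      (((Ψ y).comp ((FU' (Φ y)).comp (Pinv₀ y)) + ((Ψ' y).comp ι₀).flip (FU (Φ y))).comp ι₁)
      (ι₁ ⁻¹' V₀) z :=
    (hΨ_along.clm_apply hFU_along).congr (fun _ hx => hFV _ hx) (hFV _ hz)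
  rw [(hFVd y hz).eq_of_comp_denseRange hι₁dense hV₀ hz hFV_along]
  rfl

/-- Chart-level formulation of Lemma 3.3, the transformation rule (3.4): if
`F_V(y) = Ψ(y)(F_U(Φ(y)))` for a chart transition `Φ` with inverse transition derivative
`Ψ(y)⁻¹`, then at every point `y` of the inner kernel part `V₁ = V₀ ∩ X₁` and every
`z ∈ X₀`, `F_V'(y) z = Ψ(y)(F_U'(Φ(y))(Ψ(y)⁻¹ z)) + (Ψ'(y) z)(F_U(Φ(y)))`. -/
theorem vector_field_representation_rule
    {X X₀ X₁ : Type*}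
    [NormedAddCommGroup X] [NormedSpace ℝ X] [CompleteSpace X]
    [NormedAddCommGroup X₀] [NormedSpace ℝ X₀] [CompleteSpace X₀]
    [NormedAddCommGroup X₁] [NormedSpace ℝ X₁] [CompleteSpace X₁]
    -- the dense nest X₁ ⊆ X₀ ⊆ X
    (ι₀ : X₀ →L[ℝ] X) (hι₀inj : Function.Injective ι₀) (hι₀dense : DenseRange ι₀)
    (ι₁ : X₁ →L[ℝ] X₀) (hι₁inj : Function.Injective ι₁) (hι₁dense : DenseRange ι₁)
    (V₀ : Set X₀) (hV₀ : IsOpen V₀)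
    (hV₁dense : V₀ ⊆ closure (V₀ ∩ range ι₁))
    (Φ : X₀ → X₀) (hΦinj : InjOn Φ V₀) (hU₀open : IsOpen (Φ '' V₀))
    (hΦX₁ : MapsTo Φ (V₀ ∩ range ι₁) (range ι₁))
    (Ψ Ψinv : X₀ → (X →L[ℝ] X))
    (hinv : ∀ y ∈ V₀, (Ψ y).comp (Ψinv y) = ContinuousLinearMap.id ℝ X ∧
                      (Ψinv y).comp (Ψ y) = ContinuousLinearMap.id ℝ X)
    (FU FV : X₀ → X)
    (hFV : ∀ y ∈ V₀, FV y = Ψ y (FU (Φ y)))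
    -- (i) Ψ(y)⁻¹ maps X₀ into X₀ with restriction Pinv₀ y, and the restriction of Φ to V₁
    -- is differentiable along X₁ into X₀ with derivative z ↦ Ψ(y)⁻¹ z
    (Pinv₀ : X₀ → (X₀ →L[ℝ] X₀))
    (hPinv₀ : ∀ z : X₁, ι₁ z ∈ V₀ →
      ι₀.comp (Pinv₀ (ι₁ z)) = (Ψinv (ι₁ z)).comp ι₀)
    (hΦd₁ : ∀ z : X₁, ι₁ z ∈ V₀ →
      HasFDerivWithinAt (fun z' : X₁ => Φ (ι₁ z')) ((Pinv₀ (ι₁ z)).comp ι₁) (ι₁ ⁻¹' V₀) z)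
    -- (ii) Ψ is differentiable along X₀ with X-extended derivative Ψ'(y) ∈ L(X, L(X))
    (Ψ' : X₀ → (X →L[ℝ] (X →L[ℝ] X)))
    (hΨd : ∀ z : X₁, ι₁ z ∈ V₀ → HasFDerivWithinAt Ψ ((Ψ' (ι₁ z)).comp ι₀) V₀ (ι₁ z))
    -- (iii) F_U Fréchet differentiable on U₀ = Φ '' V₀
    (FU' : X₀ → (X₀ →L[ℝ] X))
    (hFUd : ∀ x ∈ Φ '' V₀, HasFDerivWithinAt FU (FU' x) (Φ '' V₀) x)
    -- (iv) F_V Fréchet differentiable on V₀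
    (FV' : X₀ → (X₀ →L[ℝ] X))
    (hFVd : ∀ y ∈ V₀, HasFDerivWithinAt FV (FV' y) V₀ y) :
    ∀ z : X₁, ι₁ z ∈ V₀ → ∀ w : X₀,
      FV' (ι₁ z) w
        = Ψ (ι₁ z) (FU' (Φ (ι₁ z)) (Pinv₀ (ι₁ z) w))
          + (Ψ' (ι₁ z) (ι₀ w)) (FU (Φ (ι₁ z))) :=
  vector_field_representation_rule_general ι₀ ι₁ hι₁dense V₀ hV₀ Φ Ψ FU FV hFV Pinv₀ hΦd₁ Ψ' hΨd FU'
    hFUd FV' hFVd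
end

section
/- Let X₀ be a densely embedded Banach subspace of a Banach space X. Let V₀, U₀ ⊆ X₀ be open, Φ : V₀ → U₀ a map, and Ψ : V₀ → L(X) with every Ψ(y) invertible in L(X). Let F_U : U₀ → X and define F_V : V₀ → X by F_V(y) = Ψ(y)(F_U(Φ(y))) for all y ∈ V₀. Let y* ∈ V₀ and x* = Φ(y*), and assume: F_U(x*) = 0; F_U is Fréchet differentiable at x* as a map from U₀ (X₀-topology) into X, with derivative F_U'(x*) ∈ L(X₀, X); Φ is Fréchet differentiable at y* as a map from V₀ into X₀, with derivative D ∈ L(X₀) satisfying ι ∘ D = Ψ(y*)⁻¹ ∘ ι (i.e. D is the restriction of Ψ(y*)⁻¹ to X₀, which in particular maps X₀ into X₀); and Ψ is continuous at y* as a map from V₀ (X₀-topology) into L(X). Then F_V is Fréchet differentiable at y* as a map from V₀ into X, and F_V'(y*) = Ψ(y*) ∘ F_U'(x*) ∘ D; that is, F_V'(y*) z = Ψ(y*)(F_U'(x*)(Ψ(y*)⁻¹ z)) for every z ∈ X₀. -/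
open Set Filter Topology Asymptotics

/-! Write `F_V y = Ψ y (G y)` with `G = F_U ∘ Φ`, so `G y* = 0` and `G' = F_U' ∘ D` by the chain
rule. Then `F_V y - F_V y* = (Ψ y - Ψ y*) (G y) + Ψ y* (G y)`, and the first term is
`o(1) · O(y - y*)` because `Ψ` is continuous and `G` vanishes at `y*`: the product rule holds
without differentiating `Ψ`. -/

section

variable {𝕜 : Type*} [NontriviallyNormedField 𝕜]
  {E F G : Type*} [NormedAddCommGroup E] [NormedSpace 𝕜 E]
  [NormedAddCommGroup F] [NormedSpace 𝕜 F] [NormedAddCommGroup G] [NormedSpace 𝕜 G]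

theorem Asymptotics.IsBigO.clm_apply_isLittleO {α K : Type*} [SeminormedAddCommGroup K]
    {l : Filter α} {c : α → F →L[𝕜] G} {u : α → F} {g : α → K}
    (hc : Tendsto c l (𝓝 0)) (hu : u =O[l] g) :
    (fun y => c y (u y)) =o[l] g := by
  have hbound : (fun y => c y (u y)) =O[l] fun y => ‖c y‖ * ‖u y‖ :=
    .of_bound 1 (.of_forall fun y => by simpa using (c y).le_opNorm (u y))
  refine hbound.trans_isLittleO ?_
  simpa using ((isLittleO_one_iff ℝ).2 hc).norm_left.mul_isBigO hu.norm_norm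

theorem HasFDerivWithinAt.clm_apply_of_eq_zero {c : E → F →L[𝕜] G} {u : E → F}
    {u' : E →L[𝕜] F} {s : Set E} {x : E}
    (hc : ContinuousWithinAt c s x) (hu : HasFDerivWithinAt u u' s x) (hux : u x = 0) :
    HasFDerivWithinAt (fun y => c y (u y)) ((c x).comp u') s x := by
  have hc_sub : Tendsto (fun y => c y - c x) (𝓝[s] x) (𝓝 0) := tendsto_sub_nhds_zero_iff.2 hc
  have hu_bigO : u =O[𝓝[s] x] fun y => y - x := by simpa [hux] using hu.isBigO_sub
  refine .of_isLittleO <| ((hu_bigO.clm_apply_isLittleO hc_sub).add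
    (((c x).isBigO_comp _ _).trans_isLittleO hu.isLittleO)).congr_left fun y => ?_
  simp [hux]

end

theorem linearization_similar_at_zero_general
    {X X₀ : Type*}
    [NormedAddCommGroup X] [NormedSpace ℝ X]
    [NormedAddCommGroup X₀] [NormedSpace ℝ X₀]
    (V₀ U₀ : Set X₀)
    (Φ : X₀ → X₀) (hΦ : MapsTo Φ V₀ U₀)
    (Ψ : X₀ → (X →L[ℝ] X))
    (FU FV : X₀ → X)
    (hFV : ∀ y ∈ V₀, FV y = Ψ y (FU (Φ y)))
    (ystar : X₀) (hystar : ystar ∈ V₀)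
    (hFU0 : FU (Φ ystar) = 0)
    (FU' : X₀ →L[ℝ] X) (hFUd : HasFDerivWithinAt FU FU' U₀ (Φ ystar))
    (D : X₀ →L[ℝ] X₀) (hΦd : HasFDerivWithinAt Φ D V₀ ystar)
    (hΨc : ContinuousWithinAt Ψ V₀ ystar) :
    HasFDerivWithinAt FV (((Ψ ystar).comp FU').comp D) V₀ ystar :=
  ((hFUd.comp ystar hΦd hΦ).clm_apply_of_eq_zero hΨc hFU0 |>.congr hFV) (hFV ystar hystar)

/-- Chart-level formulation of Corollary 3.5: at a zero `x* = Φ(y*)` of `F_U`, the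
representation `F_V(y) = Ψ(y)(F_U(Φ(y)))` is Fréchet differentiable at `y*` with
derivative `F_V'(y*) = Ψ(y*) ∘ F_U'(x*) ∘ Ψ(y*)⁻¹|_{X₀}`. -/
theorem linearization_similar_at_zero
    {X X₀ : Type*}
    [NormedAddCommGroup X] [NormedSpace ℝ X] [CompleteSpace X]
    [NormedAddCommGroup X₀] [NormedSpace ℝ X₀] [CompleteSpace X₀]
    (ι : X₀ →L[ℝ] X) (hιinj : Function.Injective ι) (hιdense : DenseRange ι)
    (V₀ U₀ : Set X₀) (hV₀ : IsOpen V₀) (hU₀ : IsOpen U₀)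
    (Φ : X₀ → X₀) (hΦ : MapsTo Φ V₀ U₀)
    (Ψ Ψinv : X₀ → (X →L[ℝ] X))
    (hinv : ∀ y ∈ V₀, (Ψ y).comp (Ψinv y) = ContinuousLinearMap.id ℝ X ∧
                      (Ψinv y).comp (Ψ y) = ContinuousLinearMap.id ℝ X)
    (FU FV : X₀ → X)
    (hFV : ∀ y ∈ V₀, FV y = Ψ y (FU (Φ y)))
    (ystar : X₀) (hystar : ystar ∈ V₀)
    (hFU0 : FU (Φ ystar) = 0)
    (FU' : X₀ →L[ℝ] X) (hFUd : HasFDerivWithinAt FU FU' U₀ (Φ ystar))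
    (D : X₀ →L[ℝ] X₀) (hΦd : HasFDerivWithinAt Φ D V₀ ystar)
    -- D is the restriction of Ψ(y*)⁻¹ to X₀
    (hD : ι.comp D = (Ψinv ystar).comp ι)
    (hΨc : ContinuousWithinAt Ψ V₀ ystar) :
    HasFDerivWithinAt FV (((Ψ ystar).comp FU').comp D) V₀ ystar :=
  linearization_similar_at_zero_general V₀ U₀ Φ hΦ Ψ FU FV hFV ystar hystar hFU0 FU' hFUd D hΦd hΨc
end

section
/- Let n ≥ 2 be an integer and let γ, μ, R be real numbers with 0 < μ < γ and R > 0; set q = μ/γ ∈ (0,1). For each integer k ≥ 2 define λ_k = k² + (n − 2)k and μ_k = −(γ/R²) · ((λ_k − n + 1)/(n − 1)) · ((k + n − 2)·(1 − q^{2k+n−2})) / (1 + (n − 2)/k + q^{2k+n−2}). Then μ_k < 0 for every integer k ≥ 2, and the sequence (μ_k)_{k ≥ 2} is strictly decreasing: μ_{k+1} < μ_k for all k ≥ 2. In particular, the supremum of {μ_k : k ≥ 2} equals μ₂ and is negative. -/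
/-!
Write `μ_k = -(γ/R²) · a_k · b_k` with `a_k = (λ_k - n + 1)/(n - 1)` and
`b_k = (k + n - 2)(1 - q^{2k+n-2}) / (1 + (n - 2)/k + q^{2k+n-2})`.
Since `λ_k - n + 1 = (k - 1)(k + n - 1)`, the factor `a_k` is positive and increasing for `k ≥ 2`.
For `0 < q < 1` the power `q^{2k+n-2}` lies in `(0, 1)` and decreases in `k`, so the numerator of `b_k` is
positive and increasing while its denominator is positive and decreasing. Hence `a_k b_k` is
positive and strictly increasing, and `μ_k` is negative and strictly decreasing.
-/

/-- The eigenvalues `λ_k = k² + (n − 2)k` of the negative Laplace–Beltrami operator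
on the unit sphere `𝕊^{n−1}`. -/
noncomputable def lamEig (n k : ℕ) : ℝ := (k : ℝ) ^ 2 + ((n : ℝ) - 2) * k

/-- The nonzero eigenvalues `μ_k` (Lemma 5.4) of the linearization `F'(0)` at the radially
symmetric stationary solution of the two-free-surface Hele-Shaw problem, with `q = μ/γ`. -/
noncomputable def muEig (n : ℕ) (γ R q : ℝ) (k : ℕ) : ℝ :=
  -(γ / R ^ 2) * ((lamEig n k - (n : ℝ) + 1) / ((n : ℝ) - 1)) *
    (((k : ℝ) + (n : ℝ) - 2) * (1 - q ^ (2 * k + n - 2)) /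
      (1 + ((n : ℝ) - 2) / (k : ℝ) + q ^ (2 * k + n - 2)))

noncomputable def lamFactor (n k : ℕ) : ℝ := (lamEig n k - n + 1) / (n - 1)

noncomputable def qFactor (n : ℕ) (q : ℝ) (k : ℕ) : ℝ :=
  ((k : ℝ) + n - 2) * (1 - q ^ (2 * k + n - 2)) / (1 + ((n : ℝ) - 2) / k + q ^ (2 * k + n - 2))

lemma muEig_eq_neg_mul (n : ℕ) (γ R q : ℝ) (k : ℕ) :
    muEig n γ R q k = -(γ / R ^ 2) * (lamFactor n k * qFactor n q k) := by
  rw [muEig, lamFactor, qFactor, mul_assoc]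

lemma lamEig_sub_add_one (n k : ℕ) : lamEig n k - n + 1 = ((k : ℝ) - 1) * (k + n - 1) := by
  rw [lamEig]; ring

section
variable {n k : ℕ}

lemma lamFactor_pos (hn : 2 ≤ n) (hk : 2 ≤ k) : 0 < lamFactor n k := by
  have hn' : (2 : ℝ) ≤ n := mod_cast hn
  have hk' : (2 : ℝ) ≤ k := mod_cast hk
  rw [lamFactor, lamEig_sub_add_one]
  exact div_pos (mul_pos (by linarith) (by linarith)) (by linarith)

lemma lamFactor_lt_succ (hn : 2 ≤ n) (k : ℕ) : lamFactor n k < lamFactor n (k + 1) := by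
  have hn' : (2 : ℝ) ≤ n := mod_cast hn
  have hk' : (0 : ℝ) ≤ k := k.cast_nonneg
  rw [lamFactor, lamFactor, lamEig_sub_add_one, lamEig_sub_add_one]
  refine div_lt_div_of_pos_right ?_ (by linarith)
  push_cast
  nlinarith

variable {q : ℝ}

lemma qFactor_denom_pos (hn : 2 ≤ n) (hq : 0 < q) :
    0 < 1 + ((n : ℝ) - 2) / k + q ^ (2 * k + n - 2) := by
  have hn' : (0 : ℝ) ≤ n - 2 := by
    rw [sub_nonneg]
    exact_mod_cast hn
  have := div_nonneg hn' k.cast_nonneg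
  positivity

lemma qFactor_pos (hn : 2 ≤ n) (hk : 2 ≤ k) (hq₀ : 0 < q) (hq₁ : q < 1) :
    0 < qFactor n q k := by
  have hn' : (2 : ℝ) ≤ n := mod_cast hn
  have hk' : (2 : ℝ) ≤ k := mod_cast hk
  have hpow : q ^ (2 * k + n - 2) < 1 := pow_lt_one₀ hq₀.le hq₁ (by omega)
  exact div_pos (mul_pos (by linarith) (by linarith)) (qFactor_denom_pos hn hq₀)

lemma qFactor_lt_succ (hn : 2 ≤ n) (hk : 1 ≤ k) (hq₀ : 0 < q) (hq₁ : q < 1) :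
    qFactor n q k < qFactor n q (k + 1) := by
  have hn' : (2 : ℝ) ≤ n := mod_cast hn
  have hk' : (1 : ℝ) ≤ k := mod_cast hk
  have hexp : 2 * (k + 1) + n - 2 = (2 * k + n - 2) + 2 := by omega
  have hden := qFactor_denom_pos (k := k + 1) (q := q) hn hq₀
  rw [hexp] at hden
  set e := 2 * k + n - 2
  have hpow : q ^ e < 1 := pow_lt_one₀ hq₀.le hq₁ (by omega)
  have hpow_succ : q ^ (e + 2) < q ^ e := pow_lt_pow_right_of_lt_one₀ hq₀ hq₁ (by omega)
  rw [qFactor, qFactor, hexp]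
  push_cast
  apply div_lt_div₀
  · nlinarith
  · have : ((n : ℝ) - 2) / (k + 1) ≤ (n - 2) / k :=
      div_le_div_of_nonneg_left (by linarith) (by linarith) (by linarith)
    linarith
  · nlinarith
  · exact_mod_cast hden

end

/-- Key fact in the proof of Theorem 1.2: the sequence `(μ_k)_{k ≥ 2}` is a strictly
monotone decreasing sequence of negative numbers, so its supremum is `μ₂ < 0`. -/
theorem muEig_neg_strict_anti (n : ℕ) (hn : 2 ≤ n)
    (γ μ R : ℝ) (hμ : 0 < μ) (hμγ : μ < γ) (hR : 0 < R)
    (q : ℝ) (hq : q = μ / γ) :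
    (∀ k : ℕ, 2 ≤ k → muEig n γ R q k < 0) ∧
    (∀ k : ℕ, 2 ≤ k → muEig n γ R q (k + 1) < muEig n γ R q k) ∧
    IsGreatest {x : ℝ | ∃ k : ℕ, 2 ≤ k ∧ x = muEig n γ R q k} (muEig n γ R q 2) ∧
    muEig n γ R q 2 < 0 := by
  have hγ : 0 < γ := hμ.trans hμγ
  have hq₀ : 0 < q := hq ▸ div_pos hμ hγ
  have hq₁ : q < 1 := hq ▸ (div_lt_one hγ).mpr hμγ
  have hscale : -(γ / R ^ 2) < 0 := neg_neg_of_pos (by positivity)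
  have hneg : ∀ k, 2 ≤ k → muEig n γ R q k < 0 := fun k hk => by
    rw [muEig_eq_neg_mul]
    exact mul_neg_of_neg_of_pos hscale (mul_pos (lamFactor_pos hn hk) (qFactor_pos hn hk hq₀ hq₁))
  have hstep : ∀ k, 2 ≤ k → muEig n γ R q (k + 1) < muEig n γ R q k := fun k hk => by
    rw [muEig_eq_neg_mul, muEig_eq_neg_mul]
    refine mul_lt_mul_of_neg_left ?_ hscale
    exact mul_lt_mul'' (lamFactor_lt_succ hn k) (qFactor_lt_succ hn (by omega) hq₀ hq₁)
      (lamFactor_pos hn hk).le (qFactor_pos hn hk hq₀ hq₁).le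
  have hanti := antitoneOn_nat_Ici_of_succ_le fun k hk => (hstep k hk).le
  refine ⟨hneg, hstep, ⟨⟨2, le_rfl, rfl⟩, ?_⟩, hneg 2 le_rfl⟩
  rintro _ ⟨k, hk, rfl⟩
  exact hanti (le_refl 2) hk hk
end
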